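/- arXiv:1310.6608 — 3 statements merged into one kernel-verified Lean document; each statement's English description precedes it below -/
import Mathlib

section
/- Let m, n, t be natural numbers with n > 0 and m = t² + 1. If there exist integers x, y with |x² − m·y²| = n and n < 2t, then n is a perfect square. -/
/-!
Write `m = t² + 1`. Multiplying `x + y√m` by `√m - t`, a unit of norm `-1`, sends a solution
`(x, y)` of `|x² - m y²| = n` to the solution `(m y - t x, x - t y)`. For `x, y ≥ 0` the bound
`n < 2t` forces `(t - 1) y < x < (t + 1) y`, so `|x - t y| < y` and the descent terminates at
a solution with `y = 0`, where `n = x²`.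
-/

def pellForm (t x y : ℤ) : ℤ := x ^ 2 - (t ^ 2 + 1) * y ^ 2

lemma pellForm_descent (t x y : ℤ) :
    pellForm t ((t ^ 2 + 1) * y - t * x) (x - t * y) = -pellForm t x y := by
  unfold pellForm; ring

lemma pellForm_abs_abs (t x y : ℤ) : pellForm t |x| |y| = pellForm t x y := by
  simp only [pellForm, sq_abs]

lemma abs_sub_mul_lt_of_abs_pellForm_lt {t a b : ℤ} (ha : 0 ≤ a) (hb : 0 < b)
    (h : |pellForm t a b| < 2 * t) : |a - t * b| < b := by
  obtain ⟨hlo, hhi⟩ := abs_lt.mp h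
  unfold pellForm at hlo hhi
  have ht : 0 < t := by linarith [abs_nonneg (pellForm t a b)]
  have htb : t ≤ t * b ^ 2 := le_mul_of_one_le_right ht.le (one_le_pow₀ hb)
  refine abs_lt.mpr ⟨?_, ?_⟩
  · by_contra! hbelow
    have hle : a ≤ (t - 1) * b := by linarith
    nlinarith [mul_le_mul hle hle ha (by linarith)]
  · by_contra! habove
    have hge : (t + 1) * b ≤ a := by linarith
    nlinarith [mul_le_mul hge hge (by positivity) ha]

theorem isSquare_abs_pellForm_of_lt (t x y : ℤ) (h : |pellForm t x y| < 2 * t) :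
    IsSquare |pellForm t x y| := by
  obtain rfl | hy := eq_or_ne y 0
  · simpa [pellForm] using IsSquare.sq x
  · have hdesc :
        |pellForm t ((t ^ 2 + 1) * |y| - t * |x|) (|x| - t * |y|)| = |pellForm t x y| := by
      rw [pellForm_descent, abs_neg, pellForm_abs_abs]
    have := isSquare_abs_pellForm_of_lt t _ _ (hdesc ▸ h)
    rwa [hdesc] at this
termination_by y.natAbs
decreasing_by
  have := abs_sub_mul_lt_of_abs_pellForm_lt (abs_nonneg x) (abs_pos.mpr hy)
    (by rwa [pellForm_abs_abs])
  zify
  simpa only [Int.natCast_natAbs] using this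

theorem davenport_square_general (m n t : ℕ) (hm : m = t ^ 2 + 1)
    (hsol : ∃ x y : ℤ, |x ^ 2 - (m : ℤ) * y ^ 2| = (n : ℤ))
    (hlt : n < 2 * t) : ∃ k : ℤ, (n : ℤ) = k ^ 2 := by
  obtain ⟨x, y, hxy⟩ := hsol
  have hn : |pellForm t x y| = n := by simpa [pellForm, hm] using hxy
  obtain ⟨k, hk⟩ := isSquare_abs_pellForm_of_lt t x y (by omega)
  exact ⟨k, by rw [← hn, hk, sq]⟩

/-- Davenport's lemma: if `m = t² + 1` and `|x² − m·y²| = n` has an integer solution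
with `0 < n < 2t`, then `n` is a perfect square. -/
theorem davenport_square (m n t : ℕ) (hn : 0 < n) (hm : m = t ^ 2 + 1)
    (hsol : ∃ x y : ℤ, |x ^ 2 - (m : ℤ) * y ^ 2| = (n : ℤ))
    (hlt : n < 2 * t) : ∃ k : ℤ, (n : ℤ) = k ^ 2 :=
  davenport_square_general m n t hm hsol hlt
end

section
/- Let m, n, t be natural numbers with m = t² + 2 and t ≥ 12. Suppose there exist integers x, y with |x² − m·y²| = n, and suppose that neither n nor 2n is a perfect square. Then n = 2t − 1, or n = 2t + 1, or n = 4t − 7, or n = 4t − 2, or n ≥ 4t + 2. -/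
/-!
Multiplication by the unit `(t² + 1) - t√m` of `ℤ[√m]` preserves `x² - m y²` and strictly lowers
`|y|` as long as `t|y| < |x|` and `t(|x| - t|y|) < |y|`, so some solution has `x, y ≥ 0` outside
that region. Writing `x = t y + r`, the value is then `r² + 2y(rt - y)` with `1 ≤ y < rt` when
`r > 0`, and `-(2y² + q(2ty - q))` with `q = -r ≤ ty` when `r < 0`; these quadratics stay below
`4t + 2` only at the ends of their ranges, where they take the values `2t ± 1`, `4t - 7`,
`4t - 2`. The remaining cases `y = 0`, `r = 0` and `y = rt` make `n` or `2n` a square.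
-/

theorem sq_sub_mul_sq_mul_unit (T x y : ℤ) :
    ((T ^ 2 + 1) * x - T * (T ^ 2 + 2) * y) ^ 2 - (T ^ 2 + 2) * ((T ^ 2 + 1) * y - T * x) ^ 2 =
      x ^ 2 - (T ^ 2 + 2) * y ^ 2 := by
  ring

theorem exists_reduced_solution {T n : ℤ} (hT : 1 ≤ T) {x y : ℤ}
    (h : |x ^ 2 - (T ^ 2 + 2) * y ^ 2| = n) :
    ∃ X Y : ℤ, 0 ≤ X ∧ 0 ≤ Y ∧ ¬(T * Y < X ∧ T * (X - T * Y) < Y) ∧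
      |X ^ 2 - (T ^ 2 + 2) * Y ^ 2| = n := by
  induction hk : y.natAbs using Nat.strong_induction_on generalizing x y with
  | _ k ih =>
    rw [← sq_abs x, ← sq_abs y] at h
    by_cases hred : T * |y| < |x| ∧ T * (|x| - T * |y|) < |y|
    · obtain ⟨hxy, hdesc⟩ := hred
      refine ih _ ?_ (x := (T ^ 2 + 1) * |x| - T * (T ^ 2 + 2) * |y|)
        (y := (T ^ 2 + 1) * |y| - T * |x|) (by rwa [sq_sub_mul_sq_mul_unit]) rfl
      have hr : |x| - T * |y| ≤ T * (|x| - T * |y|) := le_mul_of_one_le_left (by linarith) hT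
      rw [← hk]
      zify
      rw [abs_of_pos (by linear_combination hdesc)]
      linarith
    · exact ⟨|x|, |y|, abs_nonneg x, abs_nonneg y, hred, h⟩

theorem pos_offset_value_cases {T r y : ℤ} (hT : 10 ≤ T) (hr : 1 ≤ r) (hy : 1 ≤ y)
    (hyr : y < r * T) :
    r ^ 2 + 2 * y * (r * T - y) = 2 * T - 1 ∨ r ^ 2 + 2 * y * (r * T - y) = 4 * T - 7 ∨
      4 * T + 2 ≤ r ^ 2 + 2 * y * (r * T - y) := by
  obtain rfl | hr2 : r = 1 ∨ 2 ≤ r := by omega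
  · rcases (by omega : y = 1 ∨ y = 2 ∨ (3 ≤ y ∧ y ≤ T - 3) ∨ y = T - 2 ∨ y = T - 1) with
      rfl | rfl | ⟨hy3, hyT⟩ | rfl | rfl
    · left; ring
    · right; left; ring
    · right; right; nlinarith
    · right; left; ring
    · left; ring
  · right; right; nlinarith

theorem neg_offset_value_cases {T y q : ℤ} (hT : 5 ≤ T) (hy : 1 ≤ y) (hq : 1 ≤ q)
    (hqy : q ≤ T * y) :
    2 * y ^ 2 + q * (2 * T * y - q) = 2 * T + 1 ∨ 2 * y ^ 2 + q * (2 * T * y - q) = 4 * T - 2 ∨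
      4 * T + 2 ≤ 2 * y ^ 2 + q * (2 * T * y - q) := by
  obtain rfl | hy2 : y = 1 ∨ 2 ≤ y := by omega
  · rcases (by omega : q = 1 ∨ q = 2 ∨ 3 ≤ q) with rfl | rfl | hq3
    · left; ring
    · right; left; ring
    · right; right; nlinarith
  · right; right
    obtain rfl | hq2 : q = 1 ∨ 2 ≤ q := by omega
    · nlinarith
    · nlinarith

theorem reduced_solution_value_cases {T X Y N : ℤ} (hT : 10 ≤ T) (hX : 0 ≤ X) (hY : 0 ≤ Y)
    (hred : ¬(T * Y < X ∧ T * (X - T * Y) < Y)) (hN : |X ^ 2 - (T ^ 2 + 2) * Y ^ 2| = N) :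
    (∃ k, N = k ^ 2) ∨ (∃ k, 2 * N = k ^ 2) ∨ N = 2 * T - 1 ∨ N = 2 * T + 1 ∨ N = 4 * T - 7 ∨
      N = 4 * T - 2 ∨ 4 * T + 2 ≤ N := by
  subst hN
  obtain rfl | hY1 : Y = 0 ∨ 1 ≤ Y := by omega
  · exact Or.inl ⟨X, by simp⟩
  obtain ⟨r, rfl⟩ : ∃ r, X = T * Y + r := ⟨X - T * Y, by ring⟩
  rcases lt_trichotomy r 0 with hr | rfl | hr
  · obtain ⟨q, rfl⟩ : ∃ q, r = -q := ⟨-r, by ring⟩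
    have hN : |(T * Y + -q) ^ 2 - (T ^ 2 + 2) * Y ^ 2| = 2 * Y ^ 2 + q * (2 * T * Y - q) := by
      rw [abs_of_neg (by nlinarith)]; ring
    have := neg_offset_value_cases (T := T) (q := q) (by linarith) hY1 (by linarith) (by linarith)
    rw [hN]; tauto
  · exact Or.inr (Or.inl ⟨2 * Y, by rw [abs_of_nonpos (by nlinarith)]; ring⟩)
  · have hYr : Y ≤ r * T := by
      push Not at hred
      linarith [hred (by linarith)]
    obtain rfl | hYr := hYr.eq_or_lt
    · exact Or.inl ⟨r, by rw [abs_of_nonneg (by nlinarith)]; ring⟩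
    have hN : |(T * Y + r) ^ 2 - (T ^ 2 + 2) * Y ^ 2| = r ^ 2 + 2 * Y * (r * T - Y) := by
      rw [abs_of_nonneg (by nlinarith)]; ring
    have := pos_offset_value_cases hT hr hY1 hYr
    rw [hN]; tauto

/-- For `m = t² + 2`, `t ≥ 12`: if `|x² − m·y²| = n` has an integer solution and
neither `n` nor `2n` is a perfect square, then `n = 2t ± 1`, `n = 4t − 7`, `n = 4t − 2`,
or `n ≥ 4t + 2`. -/
theorem norms_t_sq_add_two (m n t : ℕ) (hm : m = t ^ 2 + 2) (ht : 12 ≤ t)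
    (hsol : ∃ x y : ℤ, |x ^ 2 - (m : ℤ) * y ^ 2| = (n : ℤ))
    (hns : ¬ ∃ k : ℤ, (n : ℤ) = k ^ 2) (h2ns : ¬ ∃ k : ℤ, (2 * n : ℤ) = k ^ 2) :
    (n : ℤ) = 2 * t - 1 ∨ (n : ℤ) = 2 * t + 1 ∨ (n : ℤ) = 4 * t - 7 ∨
      (n : ℤ) = 4 * t - 2 ∨ (4 * t + 2 : ℤ) ≤ (n : ℤ) := by
  obtain ⟨x, y, hxy⟩ := hsol
  have hT : (10 : ℤ) ≤ t := by exact_mod_cast (by omega : 10 ≤ t)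
  rw [hm] at hxy
  push_cast at hxy
  obtain ⟨X, Y, hX, hY, hred, hN⟩ := exists_reduced_solution (by linarith) hxy
  have := reduced_solution_value_cases hT hX hY hred hN
  tauto
end

section
/- Let q be a prime number, let l > 1 be a natural number, set t = 2lq and m = t² + 1. Then there are no integers x, y with |x² − m·y²| = 4q. -/
/-!
Since `m = t² + 1`, the map `(x, y) ↦ (t x − m y, x − t y)` negates the form `x² − m y²`
(it is multiplication by the unit `t − √m` of norm `−1`). If `|x² − m y²| = n < 2t` with
`x ≥ 0`, `y > 0`, then `x` lies strictly between `(t − 1) y` and `(t + 1) y`, so `|x − t y| < y`: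
the map strictly decreases `|y|`. Descending to `y = 0` shows that `n` must be a perfect square.
With `t = 2lq` and `l > 1` we have `4q < 2t`, but `4q` is not a square.
-/

lemma neg_sq_sub_mul_sq_eq {R : Type*} [CommRing R] (t x y : R) :
    (t * x - (t ^ 2 + 1) * y) ^ 2 - (t ^ 2 + 1) * (x - t * y) ^ 2 =
      -(x ^ 2 - (t ^ 2 + 1) * y ^ 2) := by
  ring

namespace Int

lemma abs_sub_mul_lt_of_abs_sq_sub_lt {t a b : ℤ} (ha : 0 ≤ a) (hb : 0 < b)
    (h : |a ^ 2 - (t ^ 2 + 1) * b ^ 2| < 2 * t) : |a - t * b| < b := by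
  have ht : 0 < t := by linarith [abs_nonneg (a ^ 2 - (t ^ 2 + 1) * b ^ 2)]
  have hb2 : 2 * t ≤ 2 * t * b ^ 2 := le_mul_of_one_le_right (by positivity) (by nlinarith)
  rw [abs_lt] at h ⊢
  constructor
  · by_contra! hlo
    have : a ^ 2 ≤ ((t - 1) * b) ^ 2 := pow_le_pow_left₀ ha (by linarith) 2
    nlinarith
  · by_contra! hhi
    have : ((t + 1) * b) ^ 2 ≤ a ^ 2 := pow_le_pow_left₀ (by positivity) (by linarith) 2
    nlinarith

theorem isSquare_of_abs_sq_sub_eq {t n x y : ℤ} (hn : n < 2 * t)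
    (h : |x ^ 2 - (t ^ 2 + 1) * y ^ 2| = n) : IsSquare n := by
  induction hY : y.natAbs using Nat.strong_induction_on generalizing x y with
  | _ Y ih =>
    obtain rfl | hy := eq_or_ne y 0
    · exact ⟨x, by simpa [← sq, abs_of_nonneg (sq_nonneg x)] using h.symm⟩
    set a := |x|
    set b := |y|
    have h' : |a ^ 2 - (t ^ 2 + 1) * b ^ 2| = n := by rwa [sq_abs, sq_abs]
    have hdesc : |a - t * b| < b :=
      abs_sub_mul_lt_of_abs_sq_sub_lt (abs_nonneg x) (abs_pos.mpr hy) (h'.symm ▸ hn)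
    have hlt : (a - t * b).natAbs < Y := by
      rw [← hY, ← Int.ofNat_lt, Int.natCast_natAbs, Int.natCast_natAbs]
      exact hdesc
    exact ih _ hlt (x := t * a - (t ^ 2 + 1) * b) (by rw [neg_sq_sub_mul_sq_eq, abs_neg, h']) rfl

lemma isSquare_of_isSquare_sq_mul {a b : ℤ} (ha : a ≠ 0) (h : IsSquare (a ^ 2 * b)) :
    IsSquare b := by
  obtain ⟨z, hz⟩ := h
  obtain ⟨w, rfl⟩ : a ∣ z :=
    (Int.pow_dvd_pow_iff two_ne_zero).mp ⟨b, by rw [sq z, ← hz]⟩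
  exact ⟨w, mul_left_cancel₀ (pow_ne_zero 2 ha) (by rw [hz]; ring)⟩

end Int

/-- For a prime `q`, `l > 1`, `t = 2lq` and `m = t² + 1`, the equation
`|x² − m·y²| = 4q` has no integer solutions. -/
theorem no_solution_four_q (q l t m : ℕ) (hq : Nat.Prime q) (hl : 1 < l)
    (ht : t = 2 * l * q) (hm : m = t ^ 2 + 1) :
    ¬ ∃ x y : ℤ, |x ^ 2 - (m : ℤ) * y ^ 2| = (4 * q : ℤ) := by
  rintro ⟨x, y, hxy⟩
  subst hm ht
  have hlt : (4 * q : ℤ) < 2 * ((2 * l * q : ℕ) : ℤ) := by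
    push_cast
    nlinarith [show (2 : ℤ) ≤ q by exact_mod_cast hq.two_le, show (2 : ℤ) ≤ l by exact_mod_cast hl]
  have hsq : IsSquare (4 * q : ℤ) := Int.isSquare_of_abs_sq_sub_eq hlt (by exact_mod_cast hxy)
  exact (Nat.prime_iff_prime_int.mp hq).not_isSquare
    (Int.isSquare_of_isSquare_sq_mul two_ne_zero (by norm_num [hsq]))
end
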